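/- Under the gradient-flow setup with the KL assumption, the restricted injectivity assumption on B̄(θ₀, R), and the initialization condition, the whole trajectory satisfies θ(t) ∈ B̄(θ₀, R') and σ_min(J_g(θ(t))) ≥ σ₀/2 for every t ≥ 0. -/

import Mathlib

/-!
Along the flow, `t ↦ f (θ t)` decreases with derivative `-‖∇f (θ t)‖²`. While `θ` stays in
`B̄(θ₀, R)`, the Lipschitz bound on `J_g` keeps `σ_min (J_g) ≥ σ₀ / 2`, so restricted injectivity
gives `‖∇f‖ ≥ (σ_F σ₀ / 2) ‖∇L‖`, and the KL inequality for `L` becomes one for `f` with the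
desingularizing function `c ψ`, `c = 2 / (σ_F σ₀)`. Then `‖θ'‖ = ‖∇f‖ ≤ -(d/dt) c ψ (f (θ t))`, so
`‖θ t - θ₀‖ ≤ c ψ (f θ₀) = R' < R` as long as `θ` has stayed in the ball, and a continuity
argument shows that it never leaves it.
-/

open Filter MeasureTheory ProbabilityTheory
open scoped Topology NNReal

noncomputable def sigmaMin {E F : Type*} [NormedAddCommGroup E] [InnerProductSpace ℝ E]
    [CompleteSpace E] [NormedAddCommGroup F] [InnerProductSpace ℝ F] [CompleteSpace F]
    (A : E →L[ℝ] F) : ℝ :=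
  ⨅ w : {w : F // ‖w‖ = 1}, ‖ContinuousLinearMap.adjoint A w.1‖

open Set Metric ContinuousLinearMap

section SigmaMin

variable {E F : Type*} [NormedAddCommGroup E] [InnerProductSpace ℝ E] [CompleteSpace E]
  [NormedAddCommGroup F] [InnerProductSpace ℝ F] [CompleteSpace F]

theorem sigmaMin_mul_norm_le_norm_adjoint (A : E →L[ℝ] F) (w : F) :
    sigmaMin A * ‖w‖ ≤ ‖adjoint A w‖ := by
  rcases eq_or_ne w 0 with rfl | hw
  · simp
  have hw' : 0 < ‖w‖ := norm_pos_iff.mpr hw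
  have hunit : ‖‖w‖⁻¹ • w‖ = 1 := by
    rw [norm_smul, norm_inv, norm_norm, inv_mul_cancel₀ hw'.ne']
  have h : sigmaMin A ≤ ‖adjoint A (‖w‖⁻¹ • w)‖ :=
    ciInf_le ⟨0, by rintro _ ⟨v, rfl⟩; exact norm_nonneg _⟩ (⟨_, hunit⟩ : {w : F // ‖w‖ = 1})
  rwa [map_smul, norm_smul, norm_inv, norm_norm, inv_mul_eq_div, le_div_iff₀ hw'] at h

-- Without `Nontrivial F`, `sigmaMin` is an infimum over the empty type, with junk value `0`.
theorem sigmaMin_sub_norm_sub_le [Nontrivial F] (A B : E →L[ℝ] F) :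
    sigmaMin A - ‖A - B‖ ≤ sigmaMin B := by
  have : Nonempty {w : F // ‖w‖ = 1} := by
    obtain ⟨w, hw⟩ := exists_norm_eq F zero_le_one
    exact ⟨⟨w, hw⟩⟩
  refine le_ciInf fun ⟨w, hw⟩ => ?_
  have hA := sigmaMin_mul_norm_le_norm_adjoint A w
  have hAB : ‖adjoint (A - B) w‖ ≤ ‖A - B‖ * ‖w‖ := by
    simpa only [LinearIsometryEquiv.norm_map] using (adjoint (A - B)).le_opNorm w
  have htri : ‖adjoint A w‖ ≤ ‖adjoint (A - B) w‖ + ‖adjoint B w‖ := by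
    simpa only [map_sub, sub_apply, sub_add_cancel] using
      norm_add_le (adjoint (A - B) w) (adjoint B w)
  rw [hw, mul_one] at hA hAB
  dsimp only
  linarith

theorem div_two_le_sigmaMin_of_mem_closedBall [Nontrivial F] {P : Type*}
    [SeminormedAddCommGroup P] {A : P → E →L[ℝ] F} {x₀ x : P} {σ R : ℝ} (hσ₀ : 0 ≤ σ)
    (hσ : σ ≤ sigmaMin (A x₀)) (hA : ‖A x₀ - A x‖ ≤ σ / (2 * R) * ‖x₀ - x‖)
    (hx : x ∈ closedBall x₀ R) : σ / 2 ≤ sigmaMin (A x) := by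
  have hR : 0 ≤ R := dist_nonneg.trans hx
  have hnear : ‖A x₀ - A x‖ ≤ σ / 2 :=
    calc _ ≤ σ / (2 * R) * ‖x₀ - x‖ := hA
      _ ≤ σ / (2 * R) * R := by gcongr; rwa [← dist_eq_norm, dist_comm]
      _ ≤ σ / 2 := by
        rcases hR.eq_or_lt with rfl | hR
        · simp only [mul_zero]; positivity
        · exact (by field_simp : σ / (2 * R) * R = σ / 2).le
  linarith [sigmaMin_sub_norm_sub_le (A x₀) (A x)]

end SigmaMin

section Gradient

variable {P E F : Type*} [NormedAddCommGroup P] [InnerProductSpace ℝ P] [CompleteSpace P]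
  [NormedAddCommGroup E] [InnerProductSpace ℝ E] [CompleteSpace E]
  [NormedAddCommGroup F] [InnerProductSpace ℝ F] [CompleteSpace F]

theorem gradient_comp_eq_adjoint {h : F → ℝ} {A : E → F} {x : E}
    (hh : DifferentiableAt ℝ h (A x)) (hA : DifferentiableAt ℝ A x) :
    gradient (fun q => h (A q)) x = adjoint (fderiv ℝ A x) (gradient h (A x)) := by
  have hcomp : HasFDerivAt (fun q => h (A q)) ((fderiv ℝ h (A x)).comp (fderiv ℝ A x)) x :=
    hh.hasFDerivAt.comp x hA.hasFDerivAt
  have hdual : InnerProductSpace.toDual ℝ E (adjoint (fderiv ℝ A x) (gradient h (A x)))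
      = (fderiv ℝ h (A x)).comp (fderiv ℝ A x) := by
    ext v
    rw [InnerProductSpace.toDual_apply_apply, adjoint_inner_left, inner_gradient_left]
    rfl
  exact (hasGradientAt_iff_hasFDerivAt.mpr (hdual ▸ hcomp)).gradient

theorem mul_norm_gradient_le_norm_gradient_comp_comp {L : F → ℝ} {G : E → F} {g : P → E} {q : P}
    (hL : DifferentiableAt ℝ L (G (g q))) (hG : DifferentiableAt ℝ G (g q))
    (hg : DifferentiableAt ℝ g q) {σg σG : ℝ} (hσg₀ : 0 ≤ σg)
    (hσg : σg ≤ sigmaMin (fderiv ℝ g q))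
    (hσG : σG * ‖gradient L (G (g q))‖ ≤ ‖adjoint (fderiv ℝ G (g q)) (gradient L (G (g q)))‖) :
    σg * σG * ‖gradient L (G (g q))‖ ≤ ‖gradient (fun q => L (G (g q))) q‖ := by
  rw [gradient_comp_eq_adjoint (h := fun u => L (G u)) (hL.comp (g q) hG) hg,
    gradient_comp_eq_adjoint hL hG]
  set w := adjoint (fderiv ℝ G (g q)) (gradient L (G (g q)))
  calc σg * σG * ‖gradient L (G (g q))‖ ≤ σg * ‖w‖ := by
        rw [mul_assoc]; exact mul_le_mul_of_nonneg_left hσG hσg₀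
    _ ≤ sigmaMin (fderiv ℝ g q) * ‖w‖ := by gcongr
    _ ≤ ‖adjoint (fderiv ℝ g q) w‖ := sigmaMin_mul_norm_le_norm_adjoint _ _

theorem one_le_inv_mul_norm_gradient_comp_of_KL {L : F → ℝ} {h : E → F} {x : E} {ψ' : ℝ → ℝ}
    {μ : ℝ} (hμ : 0 < μ) (hKL : 1 ≤ ψ' (L (h x)) * ‖gradient L (h x)‖)
    (hgrad : μ * ‖gradient L (h x)‖ ≤ ‖gradient (fun q => L (h q)) x‖) :
    1 ≤ μ⁻¹ * ψ' (L (h x)) * ‖gradient (fun q => L (h q)) x‖ := by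
  have hψ' : 0 ≤ ψ' (L (h x)) :=
    (pos_of_mul_pos_left (zero_lt_one.trans_le hKL) (norm_nonneg _)).le
  calc 1 ≤ ψ' (L (h x)) * ‖gradient L (h x)‖ := hKL
    _ ≤ ψ' (L (h x)) * (μ⁻¹ * ‖gradient (fun q => L (h q)) x‖) := by
      gcongr; rwa [le_inv_mul_iff₀ hμ]
    _ = μ⁻¹ * ψ' (L (h x)) * ‖gradient (fun q => L (h q)) x‖ := by ring

theorem gradient_eq_zero_of_nonneg_of_eq_zero {f : E → ℝ} (hf₀ : ∀ x, 0 ≤ f x) {x : E}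
    (hx : f x = 0) : gradient f x = 0 := by
  have hmin : IsLocalMin f x := Eventually.of_forall fun y => hx ▸ hf₀ y
  simp [gradient, hmin.fderiv_eq_zero]

theorem hasDerivAt_comp_of_hasDerivAt_neg_gradient {f : E → ℝ} {θ : ℝ → E} {t : ℝ}
    (hf : DifferentiableAt ℝ f (θ t)) (hθ : HasDerivAt θ (-gradient f (θ t)) t) :
    HasDerivAt (fun s => f (θ s)) (-‖gradient f (θ t)‖ ^ 2) t := by
  have h := hf.hasFDerivAt.comp_hasDerivAt t hθ
  rwa [map_neg, ← inner_gradient_left, real_inner_self_eq_norm_sq] at h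

end Gradient

section GradientFlow

variable {E : Type*} [NormedAddCommGroup E] [InnerProductSpace ℝ E] [CompleteSpace E]
  {f : E → ℝ} {θ : ℝ → E}
  (hf : Differentiable ℝ f) (hθ : ∀ t ≥ 0, HasDerivAt θ (-gradient f (θ t)) t)
include hf hθ

theorem antitoneOn_comp_of_gradient_flow : AntitoneOn (fun t => f (θ t)) (Ici 0) := by
  have hu t (ht : 0 ≤ t) := hasDerivAt_comp_of_hasDerivAt_neg_gradient (hf _) (hθ t ht)
  refine antitoneOn_of_hasDerivWithinAt_nonpos (convex_Ici 0)
    (fun t ht => (hu t ht).continuousAt.continuousWithinAt) (fun t ht => ?_)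
    (fun t _ => neg_nonpos.mpr (sq_nonneg ‖gradient f (θ t)‖))
  rw [interior_Ici] at ht
  exact (hu t ht.le).hasDerivWithinAt

variable (hf₀ : ∀ x, 0 ≤ f x) {r₀ : ℝ} (hr₀ : f (θ 0) < r₀)
include hf₀ hr₀

theorem mem_Ico_of_gradient_flow {t : ℝ} (ht : 0 ≤ t) : f (θ t) ∈ Ico 0 r₀ :=
  ⟨hf₀ _, (antitoneOn_comp_of_gradient_flow hf hθ self_mem_Ici ht ht).trans_lt hr₀⟩

-- A right derivative suffices: `ψ` need not be differentiable at `0`, but once `f ∘ θ`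
-- reaches the minimum value `0` it stays there.
theorem hasDerivWithinAt_comp_of_gradient_flow {ψ ψ' : ℝ → ℝ}
    (hψ' : ∀ s ∈ Ioo 0 r₀, HasDerivAt ψ (ψ' s) s) {t : ℝ} (ht : 0 ≤ t) :
    HasDerivWithinAt (fun s => ψ (f (θ s))) (-(ψ' (f (θ t)) * ‖gradient f (θ t)‖ ^ 2))
      (Ici t) t := by
  rcases (hf₀ (θ t)).eq_or_lt with hzero | hpos
  · have hconst : ∀ s ∈ Ici t, ψ (f (θ s)) = ψ 0 := fun s hs => by
      have hle : f (θ s) ≤ f (θ t) := antitoneOn_comp_of_gradient_flow hf hθ ht (ht.trans hs) hs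
      rw [le_antisymm (hle.trans hzero.ge) (hf₀ _)]
    simpa [gradient_eq_zero_of_nonneg_of_eq_zero hf₀ hzero.symm] using
      (hasDerivWithinAt_const t (Ici t) (ψ 0)).congr_of_mem hconst self_mem_Ici
  · have h := ((hψ' _ ⟨hpos, (mem_Ico_of_gradient_flow hf hθ hf₀ hr₀ ht).2⟩).comp t
      (hasDerivAt_comp_of_hasDerivAt_neg_gradient (hf _) (hθ t ht))).hasDerivWithinAt (s := Ici t)
    rwa [mul_neg] at h

theorem norm_sub_le_of_gradient_flow_of_KL {ψ ψ' : ℝ → ℝ} (hψ : ContinuousOn ψ (Ico 0 r₀))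
    (hψ' : ∀ s ∈ Ioo 0 r₀, HasDerivAt ψ (ψ' s) s) {τ : ℝ}
    (hKL : ∀ s ∈ Ico 0 τ, 0 < f (θ s) → 1 ≤ ψ' (f (θ s)) * ‖gradient f (θ s)‖) :
    ∀ t ∈ Icc 0 τ, ‖θ t - θ 0‖ ≤ ψ (f (θ 0)) - ψ (f (θ t)) := by
  have hfθ : ContinuousOn (fun t => f (θ t)) (Icc 0 τ) := fun t ht =>
    (hasDerivAt_comp_of_hasDerivAt_neg_gradient (hf _) (hθ t ht.1)).continuousAt.continuousWithinAt
  refine image_norm_le_of_norm_deriv_right_le_deriv_boundary' (f' := fun t => -gradient f (θ t))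
    (B' := fun t => ψ' (f (θ t)) * ‖gradient f (θ t)‖ ^ 2)
    (fun t ht => ((hθ t ht.1).continuousAt.sub continuousAt_const).continuousWithinAt)
    (fun t ht => ((hθ t ht.1).sub_const (θ 0)).hasDerivWithinAt) (by simp)
    (continuousOn_const.sub (hψ.comp hfθ fun t ht => mem_Ico_of_gradient_flow hf hθ hf₀ hr₀ ht.1))
    (fun t ht => ?_) (fun t ht => ?_)
  · simpa using
      (hasDerivWithinAt_comp_of_gradient_flow hf hθ hf₀ hr₀ hψ' ht.1).const_sub (ψ (f (θ 0)))
  · rcases (hf₀ (θ t)).eq_or_lt with hzero | hpos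
    · simp [gradient_eq_zero_of_nonneg_of_eq_zero hf₀ hzero.symm]
    · calc ‖-gradient f (θ t)‖ = 1 * ‖gradient f (θ t)‖ := by rw [norm_neg, one_mul]
        _ ≤ ψ' (f (θ t)) * ‖gradient f (θ t)‖ * ‖gradient f (θ t)‖ := by
          gcongr; exact hKL t ht hpos
        _ = ψ' (f (θ t)) * ‖gradient f (θ t)‖ ^ 2 := by ring

end GradientFlow

theorem forall_mem_closedBall_of_dist_le {X : Type*} [PseudoMetricSpace X] {θ : ℝ → X} {x₀ : X}
    {r r' : ℝ} (hθ : ContinuousOn θ (Ici 0)) (h₀ : θ 0 = x₀) (hr : 0 ≤ r) (hr' : r' < r)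
    (htrap : ∀ T ≥ 0, (∀ s ∈ Icc 0 T, θ s ∈ closedBall x₀ r) → dist (θ T) x₀ ≤ r') :
    ∀ t ≥ 0, θ t ∈ closedBall x₀ r := by
  intro t ht
  have hsub : Icc 0 t ⊆ θ ⁻¹' closedBall x₀ r := by
    refine IsClosed.Icc_subset_of_forall_mem_nhdsGT_of_Icc_subset ?_ (by simp [h₀, hr])
      fun T hT hhist => ?_
    · rw [inter_comm]
      exact (hθ.mono Icc_subset_Ici_self).preimage_isClosed_of_isClosed isClosed_Icc
        isClosed_closedBall
    · have hlt : dist (θ T) x₀ < r := (htrap T hT.1 hhist).trans_lt hr'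
      have hnear : ∀ᶠ s in 𝓝[Ici 0] T, θ s ∈ ball x₀ r :=
        (hθ T hT.1).eventually (isOpen_ball.mem_nhds hlt)
      exact nhdsWithin_mono T (Ioi_subset_Ici hT.1)
        (hnear.mono fun s hs => ball_subset_closedBall hs)
  exact hsub ⟨ht, le_rfl⟩

theorem stmt3_general
    {n m p : ℕ} (hn : 0 < n)
    (L : EuclideanSpace ℝ (Fin m) → ℝ)
    (F : EuclideanSpace ℝ (Fin n) → EuclideanSpace ℝ (Fin m))
    (g : EuclideanSpace ℝ (Fin p) → EuclideanSpace ℝ (Fin n))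
    (hL : ContDiff ℝ 1 L)
    (hLnonneg : ∀ v, 0 ≤ L v)
    (hF : ContDiff ℝ 1 F)
    (hg : ContDiff ℝ 1 g)
    (θ θ' : ℝ → EuclideanSpace ℝ (Fin p)) (θ₀ : EuclideanSpace ℝ (Fin p))
    (hθ0 : θ 0 = θ₀)
    (hθd : ∀ t ≥ (0:ℝ), HasDerivAt θ (θ' t) t)
    (hflow : ∀ t ≥ (0:ℝ), θ' t = -gradient (fun q => L (F (g q))) (θ t))
    (r₀ : ℝ) (hr₀ : L (F (g (θ 0))) < r₀)
    (ψ ψ' : ℝ → ℝ) (hψ0 : ψ 0 = 0)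
    (hψcont : ContinuousOn ψ (Set.Ico 0 r₀))
    (hψmono : StrictMonoOn ψ (Set.Ico 0 r₀))
    (hψd : ∀ s ∈ Set.Ioo (0:ℝ) r₀, HasDerivAt ψ (ψ' s) s)
    (hKL : ∀ v : EuclideanSpace ℝ (Fin m), 0 < L v → L v < r₀ →
      1 ≤ ψ' (L v) * ‖gradient L v‖)
    (σF : ℝ) (hσF : 0 < σF)
    (σ₀ : ℝ) (hσ₀ : σ₀ = sigmaMin (fderiv ℝ g θ₀)) (hσ₀pos : 0 < σ₀)
    (R : ℝ) (hRpos : 0 < R)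
    (hinj : ∀ q ∈ Metric.closedBall θ₀ R,
      gradient L (F (g q)) ∈ LinearMap.range (fderiv ℝ F (g q) : EuclideanSpace ℝ (Fin n) →ₗ[ℝ] EuclideanSpace ℝ (Fin m)) ∧
      ∀ z ∈ LinearMap.range (fderiv ℝ F (g q) : EuclideanSpace ℝ (Fin n) →ₗ[ℝ] EuclideanSpace ℝ (Fin m)),
        σF * ‖z‖ ≤ ‖ContinuousLinearMap.adjoint (fderiv ℝ F (g q)) z‖)
    (hLip : ∀ a ∈ Metric.closedBall θ₀ R, ∀ b ∈ Metric.closedBall θ₀ R,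
      ‖fderiv ℝ g a - fderiv ℝ g b‖ ≤ σ₀ / (2 * R) * ‖a - b‖)
    (R' : ℝ) (hRdef : R' = 2 / (σF * σ₀) * ψ (L (F (g θ₀)))) (hRR : R' < R) :
    ∀ t ≥ (0:ℝ), θ t ∈ Metric.closedBall θ₀ R' ∧
      σ₀ / 2 ≤ sigmaMin (fderiv ℝ g (θ t)) := by
  have : NeZero n := ⟨hn.ne'⟩
  have hLd : Differentiable ℝ L := hL.differentiable one_ne_zero
  have hFd : Differentiable ℝ F := hF.differentiable one_ne_zero
  have hgd : Differentiable ℝ g := hg.differentiable one_ne_zero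
  set f := fun q => L (F (g q))
  have hfd : Differentiable ℝ f := fun q => (hLd _).comp q ((hFd _).comp q (hgd q))
  have hθ : ∀ t ≥ 0, HasDerivAt θ (-gradient f (θ t)) t := fun t ht => hflow t ht ▸ hθd t ht
  have hσ : ∀ q ∈ closedBall θ₀ R, σ₀ / 2 ≤ sigmaMin (fderiv ℝ g q) := fun q hq =>
    div_two_le_sigmaMin_of_mem_closedBall hσ₀pos.le hσ₀.le
      (hLip θ₀ (mem_closedBall_self hRpos.le) q hq) hq
  set c := (σ₀ / 2 * σF)⁻¹
  have hKLf : ∀ q ∈ closedBall θ₀ R, 0 < f q → f q < r₀ → 1 ≤ c * ψ' (f q) * ‖gradient f q‖ :=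
    fun q hq hpos hlt => one_le_inv_mul_norm_gradient_comp_of_KL (h := fun q => F (g q))
      (by positivity) (hKL _ hpos hlt)
      (mul_norm_gradient_le_norm_gradient_comp_comp (hLd _) (hFd _) (hgd q) (by positivity)
        (hσ q hq) ((hinj q hq).2 _ (hinj q hq).1))
  have hf₀ : ∀ q, 0 ≤ f q := fun q => hLnonneg _
  have hmem : ∀ {t : ℝ}, 0 ≤ t → f (θ t) ∈ Ico 0 r₀ := mem_Ico_of_gradient_flow hfd hθ hf₀ hr₀
  have hlength : ∀ T ≥ 0, (∀ s ∈ Icc 0 T, θ s ∈ closedBall θ₀ R) → dist (θ T) θ₀ ≤ R' := by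
    intro T hT hball
    have hbound := norm_sub_le_of_gradient_flow_of_KL hfd hθ hf₀ hr₀ (ψ := fun s => c * ψ s)
      (continuousOn_const.mul hψcont) (fun s hs => (hψd s hs).const_mul c)
      (fun s hs hpos => hKLf _ (hball s (Ico_subset_Icc_self hs)) hpos (hmem hs.1).2) T ⟨hT, le_rfl⟩
    have hψT : 0 ≤ ψ (f (θ T)) :=
      hψ0 ▸ hψmono.monotoneOn ⟨le_rfl, (hf₀ _).trans_lt hr₀⟩ (hmem hT) (hmem hT).1
    have : 0 ≤ c * ψ (f (θ T)) := by positivity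
    have hR' : R' = c * ψ (f θ₀) := by
      rw [hRdef]; congr 1; simp only [c]; field_simp
    rw [dist_eq_norm, hR', ← hθ0]
    linarith
  have hball := forall_mem_closedBall_of_dist_le
    (fun t ht => (hθd t ht).continuousAt.continuousWithinAt) hθ0 hRpos.le hRR hlength
  exact fun t ht => ⟨hlength t ht fun s hs => hball s hs.1, hσ _ (hball t ht)⟩

theorem stmt3
    {n m p : ℕ} (hn : 0 < n) (hm : 0 < m) (hp : 0 < p)
    (L : EuclideanSpace ℝ (Fin m) → ℝ)
    (F : EuclideanSpace ℝ (Fin n) → EuclideanSpace ℝ (Fin m))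
    (g : EuclideanSpace ℝ (Fin p) → EuclideanSpace ℝ (Fin n))
    (hL : ContDiff ℝ 1 L)
    (hLnonneg : ∀ v, 0 ≤ L v) (hLmin : ∃ v, L v = 0)
    (hLgrad : ∀ s : Set (EuclideanSpace ℝ (Fin m)), Bornology.IsBounded s →
      ∃ K : ℝ≥0, LipschitzOnWith K (fun v => gradient L v) s)
    (hF : ContDiff ℝ 1 F)
    (hJF : ∀ s : Set (EuclideanSpace ℝ (Fin n)), Bornology.IsBounded s →
      ∃ K : ℝ≥0, LipschitzOnWith K (fun x => fderiv ℝ F x) s)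
    (hg : ContDiff ℝ 1 g)
    (hJg : ∀ s : Set (EuclideanSpace ℝ (Fin p)), Bornology.IsBounded s →
      ∃ K : ℝ≥0, LipschitzOnWith K (fun q => fderiv ℝ g q) s)
    (θ θ' : ℝ → EuclideanSpace ℝ (Fin p)) (θ₀ : EuclideanSpace ℝ (Fin p))
    (hθ0 : θ 0 = θ₀)
    (hθd : ∀ t ≥ (0:ℝ), HasDerivAt θ (θ' t) t)
    (hθcont : ContinuousOn θ' (Set.Ici 0))
    (hflow : ∀ t ≥ (0:ℝ), θ' t = -gradient (fun q => L (F (g q))) (θ t))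
    (r₀ : ℝ) (hr₀ : L (F (g (θ 0))) < r₀)
    (ψ ψ' : ℝ → ℝ) (hψ0 : ψ 0 = 0)
    (hψcont : ContinuousOn ψ (Set.Ico 0 r₀))
    (hψmono : StrictMonoOn ψ (Set.Ico 0 r₀))
    (hψd : ∀ s ∈ Set.Ioo (0:ℝ) r₀, HasDerivAt ψ (ψ' s) s)
    (hKL : ∀ v : EuclideanSpace ℝ (Fin m), 0 < L v → L v < r₀ →
      1 ≤ ψ' (L v) * ‖gradient L v‖)
    (σF : ℝ) (hσF : 0 < σF)
    (σ₀ : ℝ) (hσ₀ : σ₀ = sigmaMin (fderiv ℝ g θ₀)) (hσ₀pos : 0 < σ₀)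
    (R : ℝ) (hRpos : 0 < R)
    (hinj : ∀ q ∈ Metric.closedBall θ₀ R,
      gradient L (F (g q)) ∈ LinearMap.range (fderiv ℝ F (g q) : EuclideanSpace ℝ (Fin n) →ₗ[ℝ] EuclideanSpace ℝ (Fin m)) ∧
      ∀ z ∈ LinearMap.range (fderiv ℝ F (g q) : EuclideanSpace ℝ (Fin n) →ₗ[ℝ] EuclideanSpace ℝ (Fin m)),
        σF * ‖z‖ ≤ ‖ContinuousLinearMap.adjoint (fderiv ℝ F (g q)) z‖)
    (hLip : ∀ a ∈ Metric.closedBall θ₀ R, ∀ b ∈ Metric.closedBall θ₀ R,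
      ‖fderiv ℝ g a - fderiv ℝ g b‖ ≤ σ₀ / (2 * R) * ‖a - b‖)
    (R' : ℝ) (hRdef : R' = 2 / (σF * σ₀) * ψ (L (F (g θ₀)))) (hRR : R' < R) :
    ∀ t ≥ (0:ℝ), θ t ∈ Metric.closedBall θ₀ R' ∧
      σ₀ / 2 ≤ sigmaMin (fderiv ℝ g (θ t)) :=
  stmt3_general hn L F g hL hLnonneg hF hg θ θ' θ₀ hθ0 hθd hflow r₀ hr₀ ψ ψ' hψ0 hψcont hψmono hψd
    hKL σF hσF σ₀ hσ₀ hσ₀pos R hRpos hinj hLip R' hRdef hRR
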